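/- The specialization F(z, 1/2) of the bivariate generating function of Otter trees by symmetrical nodes equals the exponential generating function of phylogenetic trees: Σ_{t ∈ U} (1/2)^{sym(t)} z^{|t|} = Σ_{n≥1} (2n-3)!! z^n/n!. -/

import Mathlib

open scoped Classical

/-- Plane binary trees: every node has outdegree 0 or 2. -/
inductive BT where
  | leaf : BT
  | node : BT → BT → BT

/-- Isomorphism of rooted binary trees with *unordered* children. -/
inductive Iso : BT → BT → Prop
  | leaf : Iso .leaf .leaf
  | node {a b c d} : Iso a c → Iso b d → Iso (.node a b) (.node c d)
  | swap {a b c d} : Iso a d → Iso b c → Iso (.node a b) (.node c d)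

theorem Iso.rfl : ∀ t, Iso t t
  | .leaf => .leaf
  | .node l r => .node (Iso.rfl l) (Iso.rfl r)

theorem Iso.symm' {a b : BT} (h : Iso a b) : Iso b a := by
  induction h with
  | leaf => exact .leaf
  | node h1 h2 ih1 ih2 => exact .node ih1 ih2
  | swap h1 h2 ih1 ih2 => exact .swap ih2 ih1

theorem Iso.trans' : ∀ {a b c : BT}, Iso a b → Iso b c → Iso a c := by
  intro a b c h1
  induction h1 generalizing c with
  | leaf => exact fun h2 => h2
  | node g1 g2 ih1 ih2 =>
      intro h2
      cases h2 with
      | node k1 k2 => exact .node (ih1 k1) (ih2 k2)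
      | swap k1 k2 => exact .swap (ih1 k1) (ih2 k2)
  | swap g1 g2 ih1 ih2 =>
      intro h2
      cases h2 with
      | node k1 k2 => exact .swap (ih1 k2) (ih2 k1)
      | swap k1 k2 => exact .node (ih1 k2) (ih2 k1)

instance btSetoid : Setoid BT :=
  ⟨Iso, ⟨Iso.rfl, Iso.symm', Iso.trans'⟩⟩

/-- Otter trees: isomorphism classes of unordered rooted binary trees. -/
def Otter : Type := Quotient btSetoid

/-- Number of leaves. -/
def leavesBT : BT → ℕ
  | .leaf => 1
  | .node l r => leavesBT l + leavesBT r

/-- Number of internal (binary) nodes. -/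
def internalsBT : BT → ℕ
  | .leaf => 0
  | .node l r => internalsBT l + internalsBT r + 1

/-- Number of symmetrical nodes: internal nodes whose two subtrees are isomorphic. -/
noncomputable def symBT : BT → ℕ
  | .leaf => 0
  | .node l r => symBT l + symBT r + (if Iso l r then 1 else 0)

theorem leaves_iso {a b : BT} (h : Iso a b) : leavesBT a = leavesBT b := by
  induction h with
  | leaf => rfl
  | node h1 h2 ih1 ih2 => simp [leavesBT, ih1, ih2]
  | swap h1 h2 ih1 ih2 => simp [leavesBT, ih1, ih2]; omega

theorem internals_iso {a b : BT} (h : Iso a b) : internalsBT a = internalsBT b := by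
  induction h with
  | leaf => rfl
  | node h1 h2 ih1 ih2 => simp [internalsBT, ih1, ih2]
  | swap h1 h2 ih1 ih2 => simp [internalsBT, ih1, ih2]; omega

theorem sym_iso {a b : BT} (h : Iso a b) : symBT a = symBT b := by
  induction h with
  | leaf => rfl
  | @node a b c d h1 h2 ih1 ih2 =>
      have hiff : Iso a b ↔ Iso c d :=
        ⟨fun hab => (h1.symm'.trans' hab).trans' h2,
         fun hcd => (h1.trans' hcd).trans' h2.symm'⟩
      simp only [symBT, ih1, ih2, if_congr hiff rfl rfl]
  | @swap a b c d h1 h2 ih1 ih2 =>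
      have hiff : Iso a b ↔ Iso c d :=
        ⟨fun hab => (h2.symm'.trans' hab.symm').trans' h1,
         fun hcd => (h1.trans' hcd.symm').trans' h2.symm'⟩
      simp only [symBT, ih1, ih2, if_congr hiff rfl rfl]
      omega

def Otter.leaves : Otter → ℕ := Quotient.lift leavesBT fun _ _ h => leaves_iso h
def Otter.internals : Otter → ℕ := Quotient.lift internalsBT fun _ _ h => internals_iso h
noncomputable def Otter.sym : Otter → ℕ := Quotient.lift symBT fun _ _ h => sym_iso h

/-- The set (as a type) of Otter trees with `n` leaves. -/
def OtterN (n : ℕ) : Type := {q : Otter // q.leaves = n}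

/-- Wedderburn–Etherington numbers: number of Otter trees with `n` leaves. -/
noncomputable def WE (n : ℕ) : ℕ := Nat.card (OtterN n)

/-- Binary trees with labeled leaves. -/
inductive LBT where
  | leaf : ℕ → LBT
  | node : LBT → LBT → LBT

/-- Label-preserving isomorphism with unordered children. -/
inductive LIso : LBT → LBT → Prop
  | leaf (k : ℕ) : LIso (.leaf k) (.leaf k)
  | node {a b c d} : LIso a c → LIso b d → LIso (.node a b) (.node c d)
  | swap {a b c d} : LIso a d → LIso b c → LIso (.node a b) (.node c d)

theorem LIso.rfl : ∀ t, LIso t t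
  | .leaf k => .leaf k
  | .node l r => .node (LIso.rfl l) (LIso.rfl r)

theorem LIso.symm' {a b : LBT} (h : LIso a b) : LIso b a := by
  induction h with
  | leaf k => exact .leaf k
  | node h1 h2 ih1 ih2 => exact .node ih1 ih2
  | swap h1 h2 ih1 ih2 => exact .swap ih2 ih1

theorem LIso.trans' : ∀ {a b c : LBT}, LIso a b → LIso b c → LIso a c := by
  intro a b c h1
  induction h1 generalizing c with
  | leaf k => exact fun h2 => h2
  | node g1 g2 ih1 ih2 =>
      intro h2
      cases h2 with
      | node k1 k2 => exact .node (ih1 k1) (ih2 k2)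
      | swap k1 k2 => exact .swap (ih1 k1) (ih2 k2)
  | swap g1 g2 ih1 ih2 =>
      intro h2
      cases h2 with
      | node k1 k2 => exact .swap (ih1 k2) (ih2 k1)
      | swap k1 k2 => exact .node (ih1 k2) (ih2 k1)

instance ltSetoid : Setoid LBT :=
  ⟨LIso, ⟨LIso.rfl, LIso.symm', LIso.trans'⟩⟩

/-- Labeled (phylogenetic-type) trees up to label-preserving isomorphism. -/
def LTree : Type := Quotient ltSetoid

/-- The multiset of leaf labels. -/
def labelsLT : LBT → Multiset ℕ
  | .leaf k => {k}
  | .node l r => labelsLT l + labelsLT r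

/-- The underlying unlabeled shape of a labeled tree. -/
def shapeLT : LBT → BT
  | .leaf _ => .leaf
  | .node l r => .node (shapeLT l) (shapeLT r)

theorem labels_iso {a b : LBT} (h : LIso a b) : labelsLT a = labelsLT b := by
  induction h with
  | leaf k => rfl
  | node h1 h2 ih1 ih2 => simp [labelsLT, ih1, ih2]
  | swap h1 h2 ih1 ih2 => simp [labelsLT, ih1, ih2]; exact add_comm _ _

theorem shape_iso {a b : LBT} (h : LIso a b) : Iso (shapeLT a) (shapeLT b) := by
  induction h with
  | leaf k => exact .leaf
  | node h1 h2 ih1 ih2 => exact .node ih1 ih2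
  | swap h1 h2 ih1 ih2 => exact .swap ih1 ih2

def LTree.labels : LTree → Multiset ℕ := Quotient.lift labelsLT fun _ _ h => labels_iso h

def LTree.shape : LTree → Otter :=
  Quotient.lift (fun t => (⟦shapeLT t⟧ : Otter)) fun _ _ h => Quotient.sound (shape_iso h)

/-- Phylogenetic trees of size `n`: labeled trees whose leaf labels are exactly `1, …, n`. -/
def Phylo (n : ℕ) : Type := {q : LTree // q.labels = (Finset.Icc 1 n).val}

/-- The number of phylogenetic trees of size `n`. -/
noncomputable def phyloCount (n : ℕ) : ℕ := Nat.card (Phylo n)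

/-- The double factorial `n!! = n·(n-2)·(n-4)···`. -/
def doubleFac : ℕ → ℕ
  | 0 => 1
  | 1 => 1
  | (n+2) => (n+2) * doubleFac n

/-- The probability that two independent uniformly random phylogenetic trees of
size `n` are isomorphic (have the same shape). -/
noncomputable def pIso (n : ℕ) : ℚ :=
  (Nat.card {pp : Phylo n × Phylo n // pp.1.1.shape = pp.2.1.shape} : ℚ)
    / (Nat.card (Phylo n) : ℚ) ^ 2

/-! The recursive decomposition `t = node a b` shows that the numbers
`S n = Σ_{t ∈ U_n} 2^{-sym t}` satisfy `Σ_{i+j=n} S_i S_j = 2 S_n` for `n ≥ 2`: the ordered pairs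
with `node a b = t` are `(a, b)` and `(b, a)`, which coincide exactly when the root of `t` is
symmetrical, and then the missing factor `2` is supplied by the extra `1/2` of that root. Hence
`2^k S_{k+1}` obeys the Catalan recursion, and `catalan k * (k+1)! = 2^k (2k-1)‼`. -/

open Finset
open scoped Nat

theorem doubleFac_eq_doubleFactorial : ∀ n, doubleFac n = n‼
  | 0 => rfl
  | 1 => rfl
  | n + 2 => by rw [doubleFac, doubleFac_eq_doubleFactorial n, Nat.doubleFactorial_add_two]

theorem catalan_mul_factorial_succ : ∀ k : ℕ, catalan k * (k + 1)! = 2 ^ k * (2 * k - 1)‼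
  | 0 => by simp
  | k + 1 => by
    have hcentral : (k + 2) * catalan (k + 1) * (k + 1)! * (k + 1)! = (2 * (k + 1))! := by
      rw [succ_mul_catalan_eq_centralBinom, Nat.centralBinom_eq_two_mul_choose,
        ← Nat.choose_mul_factorial_mul_factorial (by omega : k + 1 ≤ 2 * (k + 1))]
      congr 2
      omega
    have hdouble : (2 * (k + 1))! = 2 ^ (k + 1) * (k + 1)! * (2 * k + 1)‼ := by
      rw [show 2 * (k + 1) = 2 * k + 1 + 1 by ring, Nat.factorial_eq_mul_doubleFactorial,
        show 2 * k + 1 + 1 = 2 * (k + 1) by ring, Nat.doubleFactorial_two_mul]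
    apply Nat.eq_of_mul_eq_mul_right (Nat.factorial_pos (k + 1))
    rw [show 2 * (k + 1) - 1 = 2 * k + 1 by omega, Nat.factorial_succ (k + 1)]
    linear_combination hcentral.trans hdouble

theorem eq_catalan_of_succ_eq_sum {R : Type*} [Semiring R] {c : ℕ → R} (h0 : c 0 = 1)
    (hsucc : ∀ k, c (k + 1) = ∑ ij ∈ antidiagonal k, c ij.1 * c ij.2) (k : ℕ) :
    c k = catalan k := by
  induction k using Nat.strong_induction_on with
  | _ k ih =>
  rcases k with _ | k
  · simp [h0]
  · rw [hsucc, catalan_succ']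
    push_cast
    refine sum_congr rfl fun ij hij => ?_
    rw [HasAntidiagonal.mem_antidiagonal] at hij
    rw [ih ij.1 (by omega), ih ij.2 (by omega)]

theorem one_le_leavesBT : ∀ t : BT, 1 ≤ leavesBT t
  | .leaf => le_rfl
  | .node l _ => (one_le_leavesBT l).trans (Nat.le_add_right _ _)

theorem finite_setOf_leavesBT_eq (n : ℕ) : {t : BT | leavesBT t = n}.Finite := by
  induction n using Nat.strong_induction_on with
  | _ n ih =>
  have hnodes : (⋃ i ∈ Set.Ioo 0 n, (fun p : BT × BT => BT.node p.1 p.2) ''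
      ({t | leavesBT t = i} ×ˢ {t | leavesBT t = n - i})).Finite :=
    (Set.finite_Ioo 0 n).biUnion fun i hi =>
      ((ih i hi.2).prod (ih (n - i) (Nat.sub_lt (hi.1.trans hi.2) hi.1))).image _
  refine ((Set.finite_singleton BT.leaf).union hnodes).subset ?_
  rintro (_ | ⟨l, r⟩) ht
  · exact Or.inl rfl
  · have hl := one_le_leavesBT l
    have hr := one_le_leavesBT r
    change leavesBT l + leavesBT r = n at ht
    simp only [Set.mem_union, Set.mem_iUnion]
    exact Or.inr ⟨leavesBT l, ⟨hl, by omega⟩, (l, r),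
      ⟨rfl, show leavesBT r = n - leavesBT l by omega⟩, rfl⟩

namespace Otter

def leaf : Otter := ⟦.leaf⟧

def node : Otter → Otter → Otter :=
  Quotient.map₂ BT.node fun _ _ h₁ _ _ h₂ => Iso.node h₁ h₂

theorem mk_eq_mk_iff {l r : BT} : (⟦l⟧ : Otter) = ⟦r⟧ ↔ Iso l r := Quotient.eq

theorem eq_leaf_or_exists_eq_node (q : Otter) : q = leaf ∨ ∃ a b, q = node a b := by
  induction q using Quotient.inductionOn with
  | h t =>
  cases t with
  | leaf => exact Or.inl rfl
  | node l r => exact Or.inr ⟨⟦l⟧, ⟦r⟧, rfl⟩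

theorem one_le_leaves (q : Otter) : 1 ≤ q.leaves :=
  Quotient.inductionOn q one_le_leavesBT

theorem leaves_node (a b : Otter) : (node a b).leaves = a.leaves + b.leaves :=
  Quotient.inductionOn₂ a b fun _ _ => rfl

theorem sym_node (a b : Otter) :
    (node a b).sym = a.sym + b.sym + if a = b then 1 else 0 :=
  Quotient.inductionOn₂ a b fun l r => by
    change symBT l + symBT r + _ = symBT l + symBT r + _
    exact congrArg _ (if_congr mk_eq_mk_iff.symm rfl rfl)

theorem node_eq_node_iff {a b c d : Otter} :
    node a b = node c d ↔ a = c ∧ b = d ∨ a = d ∧ b = c := by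
  induction a, b using Quotient.inductionOn₂
  induction c, d using Quotient.inductionOn₂
  refine Quotient.eq.trans ⟨fun h => ?_, fun h => ?_⟩
  · change Iso _ _ at h
    rcases h with _ | ⟨h₁, h₂⟩ | ⟨h₁, h₂⟩
    exacts [Or.inl ⟨Quotient.sound h₁, Quotient.sound h₂⟩,
      Or.inr ⟨Quotient.sound h₁, Quotient.sound h₂⟩]
  · rcases h with ⟨h₁, h₂⟩ | ⟨h₁, h₂⟩
    exacts [.node (Quotient.exact h₁) (Quotient.exact h₂),
      .swap (Quotient.exact h₁) (Quotient.exact h₂)]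

theorem exists_eq_node {q : Otter} (hq : 2 ≤ q.leaves) : ∃ a b, q = node a b :=
  (q.eq_leaf_or_exists_eq_node).resolve_left fun h => by
    rw [h] at hq
    exact absurd hq (by decide)

theorem finite_setOf_leaves_eq (n : ℕ) : {q : Otter | q.leaves = n}.Finite :=
  ((finite_setOf_leavesBT_eq n).image (Quotient.mk _)).subset fun q hq => by
    induction q using Quotient.inductionOn with
    | h t => exact ⟨t, hq, rfl⟩

noncomputable def withLeaves (n : ℕ) : Finset Otter := (finite_setOf_leaves_eq n).toFinset

@[simp]
theorem mem_withLeaves {n : ℕ} {q : Otter} : q ∈ withLeaves n ↔ q.leaves = n :=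
  Set.Finite.mem_toFinset _

theorem withLeaves_zero : withLeaves 0 = ∅ :=
  eq_empty_of_forall_notMem fun q hq => by
    have := q.one_le_leaves
    rw [mem_withLeaves] at hq
    omega

theorem withLeaves_one : withLeaves 1 = {leaf} := by
  ext q
  rw [mem_withLeaves, mem_singleton]
  refine ⟨fun hq => q.eq_leaf_or_exists_eq_node.resolve_right ?_, fun hq => hq ▸ rfl⟩
  rintro ⟨a, b, rfl⟩
  have := a.one_le_leaves
  have := b.one_le_leaves
  rw [leaves_node] at hq
  omega

noncomputable def pairsWithLeaves (n : ℕ) : Finset (Otter × Otter) :=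
  (antidiagonal n).biUnion fun ij => withLeaves ij.1 ×ˢ withLeaves ij.2

theorem mem_pairsWithLeaves {n : ℕ} {p : Otter × Otter} :
    p ∈ pairsWithLeaves n ↔ p.1.leaves + p.2.leaves = n := by
  simp [pairsWithLeaves]

theorem filter_pairsWithLeaves_node_eq {n : ℕ} (a b : Otter) (h : (node a b).leaves = n) :
    (pairsWithLeaves n).filter (fun p => node p.1 p.2 = node a b) = {(a, b), (b, a)} := by
  ext ⟨c, d⟩
  rw [leaves_node] at h
  simp only [mem_filter, mem_pairsWithLeaves, node_eq_node_iff, mem_insert, mem_singleton,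
    Prod.mk.injEq]
  constructor
  · rintro ⟨-, ⟨rfl, rfl⟩ | ⟨rfl, rfl⟩⟩
    exacts [Or.inl ⟨rfl, rfl⟩, Or.inr ⟨rfl, rfl⟩]
  · rintro (⟨rfl, rfl⟩ | ⟨rfl, rfl⟩)
    exacts [⟨h, Or.inl ⟨rfl, rfl⟩⟩, ⟨by omega, Or.inr ⟨rfl, rfl⟩⟩]

noncomputable def halfWeight (q : Otter) : ℚ := (1 / 2) ^ q.sym

theorem sum_halfWeight_pair_eq (a b : Otter) :
    ∑ p ∈ {(a, b), (b, a)}, halfWeight p.1 * halfWeight p.2 = 2 * halfWeight (node a b) := by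
  by_cases hab : a = b
  · subst hab
    rw [pair_eq_singleton, sum_singleton]
    simp only [halfWeight]
    rw [sym_node, if_pos rfl, pow_succ, pow_add]
    ring
  · have hne : (a, b) ≠ (b, a) := fun h => hab (congrArg Prod.fst h)
    rw [sum_pair hne]
    simp only [halfWeight, sym_node, if_neg hab, add_zero, pow_add]
    ring

noncomputable def halfSymSum (n : ℕ) : ℚ := ∑ q ∈ withLeaves n, halfWeight q

theorem halfSymSum_zero : halfSymSum 0 = 0 := by
  rw [halfSymSum, withLeaves_zero, sum_empty]

theorem halfSymSum_one : halfSymSum 1 = 1 := by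
  rw [halfSymSum, withLeaves_one, sum_singleton, halfWeight, show leaf.sym = 0 from rfl, pow_zero]

theorem sum_antidiagonal_halfSymSum_mul {n : ℕ} (hn : 2 ≤ n) :
    ∑ ij ∈ antidiagonal n, halfSymSum ij.1 * halfSymSum ij.2 = 2 * halfSymSum n := by
  have hdisj : (antidiagonal n : Set (ℕ × ℕ)).PairwiseDisjoint
      fun ij => withLeaves ij.1 ×ˢ withLeaves ij.2 := by
    rintro ⟨i, j⟩ - ⟨i', j'⟩ - hne
    simp only [Function.onFun, disjoint_left, mem_product, mem_withLeaves]
    rintro p ⟨rfl, rfl⟩ ⟨h₁, h₂⟩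
    exact hne (Prod.ext h₁ h₂)
  have hmaps : ∀ p ∈ pairsWithLeaves n, node p.1 p.2 ∈ withLeaves n := fun p hp => by
    rw [mem_withLeaves, leaves_node, ← mem_pairsWithLeaves.1 hp]
  calc ∑ ij ∈ antidiagonal n, halfSymSum ij.1 * halfSymSum ij.2
      = ∑ ij ∈ antidiagonal n, ∑ p ∈ withLeaves ij.1 ×ˢ withLeaves ij.2,
          halfWeight p.1 * halfWeight p.2 := by
        simp only [halfSymSum, sum_mul_sum, sum_product]
    _ = ∑ p ∈ pairsWithLeaves n, halfWeight p.1 * halfWeight p.2 := (sum_biUnion hdisj).symm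
    _ = ∑ q ∈ withLeaves n, ∑ p ∈ pairsWithLeaves n with node p.1 p.2 = q,
          halfWeight p.1 * halfWeight p.2 := (sum_fiberwise_of_maps_to hmaps _).symm
    _ = ∑ q ∈ withLeaves n, 2 * halfWeight q := sum_congr rfl fun q hq => by
        rw [mem_withLeaves] at hq
        obtain ⟨a, b, rfl⟩ := exists_eq_node (hq ▸ hn)
        rw [filter_pairsWithLeaves_node_eq a b hq, sum_halfWeight_pair_eq]
    _ = 2 * halfSymSum n := (mul_sum _ _ _).symm

theorem halfSymSum_succ_mul_two_pow (k : ℕ) : halfSymSum (k + 1) * 2 ^ k = catalan k := by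
  refine eq_catalan_of_succ_eq_sum (c := fun k => halfSymSum (k + 1) * 2 ^ k) ?_ (fun k => ?_) k
  · rw [zero_add, halfSymSum_one, pow_zero, one_mul]
  · have hrec := sum_antidiagonal_halfSymSum_mul (n := k + 2) (by omega)
    rw [Nat.sum_antidiagonal_succ, Nat.sum_antidiagonal_succ', halfSymSum_zero] at hrec
    simp only [zero_mul, mul_zero, zero_add] at hrec
    calc halfSymSum (k + 2) * 2 ^ (k + 1) = 2 * halfSymSum (k + 2) * 2 ^ k := by ring
      _ = ∑ ij ∈ antidiagonal k,
            halfSymSum (ij.1 + 1) * 2 ^ ij.1 * (halfSymSum (ij.2 + 1) * 2 ^ ij.2) := by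
        rw [← hrec, sum_mul]
        refine sum_congr rfl fun ij hij => ?_
        rw [← HasAntidiagonal.mem_antidiagonal.1 hij, pow_add]
        ring

theorem halfSymSum_succ (k : ℕ) : halfSymSum (k + 1) = ((2 * k - 1)‼ : ℚ) / (k + 1)! := by
  have hcat : (catalan k * (k + 1)! : ℚ) = 2 ^ k * (2 * k - 1)‼ := by
    exact_mod_cast catalan_mul_factorial_succ k
  rw [eq_div_iff (by positivity), ← mul_left_cancel_iff_of_pos (by positivity : (0 : ℚ) < 2 ^ k),
    ← hcat, ← halfSymSum_succ_mul_two_pow]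
  ring

theorem finsum_eq_halfSymSum (n : ℕ) :
    ∑ᶠ t : OtterN n, ((1 : ℚ) / 2) ^ t.1.sym = halfSymSum n := by
  unfold OtterN
  exact (finsum_set_coe_eq_finsum_mem (f := fun q : Otter => ((1 : ℚ) / 2) ^ q.sym)
    {q | q.leaves = n}).trans (finsum_mem_eq_finite_toFinset_sum _ _)

end Otter

/-- `F(z, 1/2)` is the EGF of phylogenetic trees; coefficient-wise,
`Σ_{t ∈ U_n} (1/2)^{sym t} = (2n-3)!!/n!` for every `n ≥ 1`. -/
theorem F_at_half (n : ℕ) (hn : 1 ≤ n) :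
    ∑ᶠ t : OtterN n, ((1 : ℚ) / 2) ^ t.1.sym =
      (doubleFac (2 * n - 3) : ℚ) / n.factorial := by
  obtain ⟨k, rfl⟩ := Nat.exists_eq_add_of_le' hn
  rw [Otter.finsum_eq_halfSymSum, Otter.halfSymSum_succ,
    doubleFac_eq_doubleFactorial, show 2 * (k + 1) - 3 = 2 * k - 1 by omega]
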